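/- arXiv:2603.20068 — 4 statements merged into one kernel-verified Lean document; each statement's English description precedes it below -/
import Mathlib

section
/- Fix y ∈ ℝ and σ > 0. Let θᵗ ~ N(y/(1+σ²), σ²/(1+σ²)) (the posterior given y), and yᵗ|θᵗ ~ N(θᵗ, σ²). Define μᵗ = yᵗ/(1+σ²), σ_post = σ/√(1+σ²), and z = (θᵗ − μᵗ)/σ_post. Then z ~ N( σ·y/(1+σ²)^{3/2}, (σ⁴+σ²+1)/(1+σ²)² ). -/
open MeasureTheory ProbabilityTheory

open scoped ENNReal NNReal
open Real


lemma aux_map_withDensity_equiv {α β : Type*} [MeasurableSpace α] [MeasurableSpace β]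
    (e : α ≃ᵐ β) (μ : Measure α) {f : α → ℝ≥0∞} (hf : Measurable f) :
    (μ.withDensity f).map e = (μ.map e).withDensity (fun y => f (e.symm y)) := by
  ext s hs
  rw [Measure.map_apply e.measurable hs, withDensity_apply _ (e.measurable hs),
    withDensity_apply _ hs]
  have h := setLIntegral_map (μ := μ) hs (hf.comp e.symm.measurable) e.measurable
  simp only [Function.comp_apply, MeasurableEquiv.symm_apply_apply] at h
  exact h.symm

lemma aux_gaussianReal_prod_eq (m₁ m₂ : ℝ) {v : ℝ≥0} (hv : v ≠ 0) :
    (gaussianReal m₁ v).prod (gaussianReal m₂ v)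
      = ((volume : Measure ℝ).prod volume).withDensity
          (fun p => gaussianPDF m₁ v p.1 * gaussianPDF m₂ v p.2) :=
  Measure.prod_eq fun s t hs ht => by
    rw [withDensity_apply _ (hs.prod ht), ← Measure.prod_restrict,
      lintegral_prod_mul (measurable_gaussianPDF _ _).aemeasurable
        (measurable_gaussianPDF _ _).aemeasurable,
      gaussianReal_apply _ hv, gaussianReal_apply _ hv]

lemma aux_std_prod_map_linear (a b : ℝ) (hv : 0 < a ^ 2 + b ^ 2) :
    ((gaussianReal 0 1).prod (gaussianReal 0 1)).map (fun p : ℝ × ℝ => a * p.1 + b * p.2)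
      = gaussianReal 0 ((a ^ 2 + b ^ 2).toNNReal) := by
  set v : ℝ := a ^ 2 + b ^ 2 with hvdef
  have hv0 : v ≠ 0 := ne_of_gt hv
  have hvt : (v.toNNReal : ℝ) = v := Real.coe_toNNReal _ hv.le
  have hvtne : v.toNNReal ≠ 0 := by
    simp only [ne_eq, Real.toNNReal_eq_zero, not_le]
    exact hv
  set M : Matrix (Fin 2) (Fin 2) ℝ := !![a, b; -b, a] with hM
  set N : Matrix (Fin 2) (Fin 2) ℝ := !![a / v, -(b / v); b / v, a / v] with hN
  set Lm : (ℝ × ℝ) →ₗ[ℝ] (ℝ × ℝ) :=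
    Matrix.toLin (Module.Basis.finTwoProd ℝ) (Module.Basis.finTwoProd ℝ) M with hLm
  set Nm : (ℝ × ℝ) →ₗ[ℝ] (ℝ × ℝ) :=
    Matrix.toLin (Module.Basis.finTwoProd ℝ) (Module.Basis.finTwoProd ℝ) N with hNm
  have hMN : M * N = 1 := by
    ext i j
    fin_cases i <;> fin_cases j <;>
      · simp [hM, hN, Matrix.mul_apply, Fin.sum_univ_two, Matrix.one_apply]
        field_simp
        ring
  have hNM : N * M = 1 := by
    ext i j
    fin_cases i <;> fin_cases j <;>
      · simp [hM, hN, Matrix.mul_apply, Fin.sum_univ_two, Matrix.one_apply]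
        field_simp
        ring
  have hcomp1 : Lm.comp Nm = LinearMap.id := by
    rw [hLm, hNm, ← Matrix.toLin_mul, hMN, Matrix.toLin_one]
  have hcomp2 : Nm.comp Lm = LinearMap.id := by
    rw [hLm, hNm, ← Matrix.toLin_mul, hNM, Matrix.toLin_one]
  have hLcont : Continuous Lm := LinearMap.continuous_of_finiteDimensional _
  have hNcont : Continuous Nm := LinearMap.continuous_of_finiteDimensional _
  set e : (ℝ × ℝ) ≃ᵐ (ℝ × ℝ) :=
    { toFun := Lm
      invFun := Nm
      left_inv := fun x => by
        have := congrArg (fun (g : (ℝ × ℝ) →ₗ[ℝ] (ℝ × ℝ)) => g x) hcomp2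
        simpa using this
      right_inv := fun x => by
        have := congrArg (fun (g : (ℝ × ℝ) →ₗ[ℝ] (ℝ × ℝ)) => g x) hcomp1
        simpa using this
      measurable_toFun := hLcont.measurable
      measurable_invFun := hNcont.measurable } with he_def
  have he : ⇑e = ⇑Lm := rfl
  have hesymm : ⇑e.symm = ⇑Nm := rfl
  have hdet : LinearMap.det Lm = v := by
    rw [hLm, LinearMap.det_toLin, hM, Matrix.det_fin_two_of, hvdef]
    ring
  have hLapp : ∀ p : ℝ × ℝ, Lm p = (a * p.1 + b * p.2, -b * p.1 + a * p.2) := by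
    intro p
    rw [hLm, hM]
    exact Matrix.toLin_finTwoProd_apply _ _ _ _ _
  have hNapp : ∀ p : ℝ × ℝ, Nm p = (a / v * p.1 + -(b / v) * p.2, b / v * p.1 + a / v * p.2) := by
    intro p
    rw [hNm, hN]
    exact Matrix.toLin_finTwoProd_apply _ _ _ _ _
  have h2pi : (0:ℝ) < 2 * π := by positivity
  have h2piv : (0:ℝ) < 2 * π * v := by positivity
  have hdens : ∀ q : ℝ × ℝ,
      gaussianPDF 0 1 (Nm q).1 * gaussianPDF 0 1 (Nm q).2
        = ENNReal.ofReal v * (gaussianPDF 0 v.toNNReal q.1 * gaussianPDF 0 v.toNNReal q.2) := by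
    intro q
    rw [hNapp]
    simp only [gaussianPDF]
    rw [← ENNReal.ofReal_mul (gaussianPDFReal_nonneg _ _ _),
      ← ENNReal.ofReal_mul (gaussianPDFReal_nonneg _ _ _),
      ← ENNReal.ofReal_mul hv.le]
    congr 1
    simp only [gaussianPDFReal, NNReal.coe_one, hvt, mul_one, sub_zero]
    have hexp : rexp (-(a / v * q.1 + -(b / v) * q.2) ^ 2 / 2)
          * rexp (-(b / v * q.1 + a / v * q.2) ^ 2 / 2)
        = rexp (-q.1 ^ 2 / (2 * v)) * rexp (-q.2 ^ 2 / (2 * v)) := by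
      rw [← Real.exp_add, ← Real.exp_add]
      congr 1
      rw [hvdef] at hv0 ⊢
      field_simp
      ring
    have hA : Real.sqrt (2 * π) * Real.sqrt (2 * π) = 2 * π := Real.mul_self_sqrt h2pi.le
    have hB : Real.sqrt (2 * π * v) * Real.sqrt (2 * π * v) = 2 * π * v :=
      Real.mul_self_sqrt h2piv.le
    have hconst : (√(2 * π))⁻¹ * (√(2 * π))⁻¹ = v * ((√(2 * π * v))⁻¹ * (√(2 * π * v))⁻¹) := by
      rw [← mul_inv, ← mul_inv, hA, hB]
      field_simp
    rw [mul_mul_mul_comm, hexp, hconst]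
    ring
  have hF : Measurable fun p : ℝ × ℝ => gaussianPDF 0 1 p.1 * gaussianPDF 0 1 p.2 :=
    ((measurable_gaussianPDF _ _).comp measurable_fst).mul
      ((measurable_gaussianPDF _ _).comp measurable_snd)
  have hmapvol : ((volume : Measure ℝ).prod volume).map ⇑Lm
      = ENNReal.ofReal |v⁻¹| • ((volume : Measure ℝ).prod volume) := by
    have h := Measure.map_linearMap_addHaar_eq_smul_addHaar (μ := (volume : Measure (ℝ × ℝ)))
      (f := Lm) (by rw [hdet]; exact hv0)
    rw [hdet, Measure.volume_eq_prod] at h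
    exact h
  have hfsteq : (fun p : ℝ × ℝ => a * p.1 + b * p.2) = Prod.fst ∘ ⇑Lm := by
    funext p
    simp [hLapp]
  rw [aux_gaussianReal_prod_eq 0 0 one_ne_zero, hfsteq,
    ← Measure.map_map measurable_fst hLcont.measurable]
  have hmain : (((volume : Measure ℝ).prod volume).withDensity
        (fun p => gaussianPDF 0 1 p.1 * gaussianPDF 0 1 p.2)).map ⇑Lm
      = (gaussianReal 0 v.toNNReal).prod (gaussianReal 0 v.toNNReal) := by
    rw [← he, aux_map_withDensity_equiv e _ hF, he]
    rw [hmapvol, withDensity_smul_measure]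
    have hdenseq : (fun q : ℝ × ℝ =>
          gaussianPDF 0 1 (e.symm q).1 * gaussianPDF 0 1 (e.symm q).2)
        = fun q => ENNReal.ofReal v
            * (gaussianPDF 0 v.toNNReal q.1 * gaussianPDF 0 v.toNNReal q.2) := by
      funext q
      rw [hesymm]
      exact hdens q
    rw [hdenseq,
      show (fun q : ℝ × ℝ => ENNReal.ofReal v
          * (gaussianPDF 0 v.toNNReal q.1 * gaussianPDF 0 v.toNNReal q.2))
        = (ENNReal.ofReal v) • (fun q : ℝ × ℝ =>
            gaussianPDF 0 v.toNNReal q.1 * gaussianPDF 0 v.toNNReal q.2) from rfl,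
      withDensity_smul _ (show Measurable (fun q : ℝ × ℝ =>
          gaussianPDF 0 v.toNNReal q.1 * gaussianPDF 0 v.toNNReal q.2) from
        ((measurable_gaussianPDF _ _).comp measurable_fst).mul
          ((measurable_gaussianPDF _ _).comp measurable_snd)),
      smul_smul]
    have hone : ENNReal.ofReal |v⁻¹| * ENNReal.ofReal v = 1 := by
      rw [abs_of_pos (inv_pos.mpr hv), ← ENNReal.ofReal_mul (inv_nonneg.mpr hv.le),
        inv_mul_cancel₀ hv0, ENNReal.ofReal_one]
    rw [hone, one_smul, ← aux_gaussianReal_prod_eq 0 0 hvtne]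
  rw [hmain, Measure.map_fst_prod, measure_univ, one_smul]

lemma aux_map_lincomb {Ω : Type*} [MeasurableSpace Ω] (μ : Measure Ω) [IsProbabilityMeasure μ]
    (Z₁ Z₂ : Ω → ℝ) (hZ₁ : Measurable Z₁) (hZ₂ : Measurable Z₂)
    (hindep : IndepFun Z₁ Z₂ μ)
    (h1 : μ.map Z₁ = gaussianReal 0 1) (h2 : μ.map Z₂ = gaussianReal 0 1)
    (a b : ℝ) (hv : 0 < a ^ 2 + b ^ 2) :
    μ.map (fun ω => a * Z₁ ω + b * Z₂ ω) = gaussianReal 0 ((a ^ 2 + b ^ 2).toNNReal) := by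
  have hpair : μ.map (fun ω => (Z₁ ω, Z₂ ω)) = (gaussianReal 0 1).prod (gaussianReal 0 1) := by
    have h := (indepFun_iff_map_prod_eq_prod_map_map hZ₁.aemeasurable hZ₂.aemeasurable).mp hindep
    rw [h1, h2] at h
    exact h
  have hcomp : (fun ω => a * Z₁ ω + b * Z₂ ω)
      = (fun p : ℝ × ℝ => a * p.1 + b * p.2) ∘ (fun ω => (Z₁ ω, Z₂ ω)) := rfl
  rw [hcomp, ← Measure.map_map (show Measurable (fun p : ℝ × ℝ => a * p.1 + b * p.2) from (measurable_fst.const_mul a).add (measurable_snd.const_mul b))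
    (hZ₁.prodMk hZ₂), hpair, aux_std_prod_map_linear a b hv]

/-- Posterior calibration checking for the normal-normal model. Fix `y` and `σ > 0`.
Draw `θᵗ ~ N(y/(1+σ²), σ²/(1+σ²))` (the posterior given `y`), then `yᵗ | θᵗ ~ N(θᵗ, σ²)`.
The z-score `z = (θᵗ − yᵗ/(1+σ²))/(σ/√(1+σ²))` has distribution
`N(σ·y/(1+σ²)^{3/2}, (σ⁴+σ²+1)/(1+σ²)²)`. -/
theorem posterior_zscore_distribution
    {Ω : Type*} [MeasurableSpace Ω]
    (μ : Measure Ω) [IsProbabilityMeasure μ]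
    (Z₁ Z₂ : Ω → ℝ) (hZ₁ : Measurable Z₁) (hZ₂ : Measurable Z₂)
    (hindep : IndepFun Z₁ Z₂ μ)
    (h1 : μ.map Z₁ = gaussianReal 0 1) (h2 : μ.map Z₂ = gaussianReal 0 1)
    (σ y : ℝ) (hσ : 0 < σ)
    (θt yt z : Ω → ℝ)
    (hθt : θt = fun ω => y / (1 + σ ^ 2) + (σ / Real.sqrt (1 + σ ^ 2)) * Z₁ ω)
    (hyt : yt = fun ω => θt ω + σ * Z₂ ω)
    (hz : z = fun ω => (θt ω - yt ω / (1 + σ ^ 2)) / (σ / Real.sqrt (1 + σ ^ 2))) :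
    μ.map z
      = gaussianReal (σ * y / (1 + σ ^ 2) ^ ((3 : ℝ) / 2))
          (((σ ^ 4 + σ ^ 2 + 1) / (1 + σ ^ 2) ^ 2).toNNReal) := by
  subst hθt hyt hz
  set t : ℝ := 1 + σ ^ 2 with htdef
  have ht0 : (0:ℝ) < t := by rw [htdef]; positivity
  set s : ℝ := Real.sqrt t with hsd
  have hs0 : 0 < s := Real.sqrt_pos.mpr ht0
  have hs2 : s ^ 2 = t := Real.sq_sqrt ht0.le
  have hrel : s ^ 2 = 1 + σ ^ 2 := hs2.trans htdef
  set A : ℝ := σ ^ 2 / t with hA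
  set B : ℝ := -(1 / s) with hB
  set C : ℝ := σ * y * s / t ^ 2 with hC
  have hv : 0 < A ^ 2 + B ^ 2 := by
    have hA0 : 0 < A := by rw [hA]; positivity
    positivity
  have hsum := aux_map_lincomb μ Z₁ Z₂ hZ₁ hZ₂ hindep h1 h2 A B hv
  have hzz : (fun ω => ((y / t + σ / s * Z₁ ω) - ((y / t + σ / s * Z₁ ω) + σ * Z₂ ω) / t) / (σ / s))
      = fun ω => (A * Z₁ ω + B * Z₂ ω) + C := by
    funext ω
    rw [hA, hB, hC, ← hs2]
    field_simp
    linear_combination (y + s * σ * Z₁ ω) * hrel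
  rw [hzz, show (fun ω => (A * Z₁ ω + B * Z₂ ω) + C)
      = (fun x => x + C) ∘ (fun ω => A * Z₁ ω + B * Z₂ ω) from rfl,
    ← Measure.map_map (measurable_add_const C) (show Measurable (fun ω => A * Z₁ ω + B * Z₂ ω) from (hZ₁.const_mul A).add (hZ₂.const_mul B)),
    hsum, gaussianReal_map_add_const C]
  have hmean : (0:ℝ) + C = σ * y / t ^ ((3:ℝ)/2) := by
    have h32 : t ^ ((3:ℝ)/2) = t * s := by
      rw [hsd, Real.sqrt_eq_rpow, show ((3:ℝ)/2) = 1 + 1/2 by norm_num,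
        Real.rpow_add ht0, Real.rpow_one]
    rw [h32, zero_add, hC, ← hs2]
    field_simp
  have hvar : (A ^ 2 + B ^ 2).toNNReal = ((σ ^ 4 + σ ^ 2 + 1) / t ^ 2).toNNReal := by
    congr 1
    rw [hA, hB, ← hs2]
    field_simp
    linear_combination hrel
  rw [hmean, hvar]
end

section
/- Let θ ~ p(θ), y|θ ~ p(y|θ), and conditionally on y let θ_post ~ p(θ|y) be independent of θ given y. Then (θ, y) and (θ_post, y) have the same joint distribution; consequently the rank statistic q = P(θ > θ_post | θ, y), for continuous posteriors, is uniformly distributed on (0,1). -/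
open MeasureTheory ProbabilityTheory

open Set
open scoped ENNReal

lemma pit_aux (m : Measure ℝ) [IsProbabilityMeasure m] (h : ∀ x : ℝ, m {x} = 0) :
    m.map (fun x => (m (Set.Iio x)).toReal) = volume.restrict (Set.Ioo 0 1) := by
  have hIic : ∀ x : ℝ, m (Iic x) = m (Iio x) := by
    intro x
    rw [← Iio_union_right, measure_union (by simp) (measurableSet_singleton x), h x, add_zero]
  have hne : ∀ x : ℝ, m (Iio x) ≠ ∞ := fun x => measure_ne_top m _
  have hmono : Monotone fun x : ℝ => m (Iio x) :=
    fun a b hab => measure_mono (Iio_subset_Iio hab)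
  have hmeas0 : Measurable fun x : ℝ => m (Iio x) := hmono.measurable
  set F : ℝ → ℝ := fun x => (m (Iio x)).toReal with hFdef
  have hF : Measurable F := hmeas0.ennreal_toReal
  have hFcdf : ∀ x, F x = cdf m x := by
    intro x; rw [cdf_eq_real, measureReal_def, hIic]
  have hFmono : Monotone F := fun a b hab => ENNReal.toReal_mono (hne b) (hmono hab)
  have hF01 : ∀ x, 0 ≤ F x ∧ F x ≤ 1 := by
    intro x; rw [hFcdf]; exact ⟨cdf_nonneg m x, cdf_le_one m x⟩
  have hofReal : ∀ x, ENNReal.ofReal (F x) = m (Iio x) := fun x => ENNReal.ofReal_toReal (hne x)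
  have hfin : IsFiniteMeasure (volume.restrict (Ioo (0:ℝ) 1)) := by
    constructor
    rw [Measure.restrict_apply_univ, Real.volume_Ioo]
    exact ENNReal.ofReal_lt_top
  have hmap : IsProbabilityMeasure (m.map F) := Measure.isProbabilityMeasure_map hF.aemeasurable
  refine Measure.ext_of_Iic _ _ (fun t => ?_)
  rw [Measure.map_apply hF measurableSet_Iic, Measure.restrict_apply measurableSet_Iic]
  have hpre : F ⁻¹' Iic t = {x | F x ≤ t} := rfl
  rcases lt_or_ge t 0 with ht | ht
  · -- t < 0
    have h1 : F ⁻¹' Iic t = ∅ := by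
      ext x; simp only [mem_preimage, mem_Iic, mem_empty_iff_false, iff_false, not_le]
      exact lt_of_lt_of_le ht (hF01 x).1
    have h2 : Iic t ∩ Ioo (0:ℝ) 1 = ∅ := by
      ext x; simp only [mem_inter_iff, mem_Iic, mem_Ioo, mem_empty_iff_false, iff_false]
      rintro ⟨hx, hx0, _⟩; linarith
    rw [h1, h2]
    simp
  rcases lt_or_ge t 1 with ht1 | ht1
  · -- 0 ≤ t < 1
    have hRHS : Iic t ∩ Ioo (0:ℝ) 1 = Ioc 0 t := by
      ext x
      simp only [mem_inter_iff, mem_Iic, mem_Ioo, mem_Ioc]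
      constructor
      · rintro ⟨hx, hx0, _⟩; exact ⟨hx0, hx⟩
      · rintro ⟨hx0, hx⟩; exact ⟨hx, hx0, lt_of_le_of_lt hx ht1⟩
    rw [hRHS, Real.volume_Ioc, sub_zero]
    set S : Set ℝ := {x | F x ≤ t} with hSdef
    -- S is bounded above
    have hbdd : BddAbove S := by
      have hev := (tendsto_cdf_atTop m).eventually (eventually_ge_nhds (by linarith : (1 + t) / 2 < 1))
      rcases hev.exists with ⟨x, hx⟩
      refine ⟨x, fun s hs => ?_⟩
      by_contra hsx
      push_neg at hsx
      have : ((1:ℝ) + t) / 2 ≤ F s := le_trans (by rw [hFcdf]; exact hx) (hFmono hsx.le)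
      have : F s ≤ t := hs
      linarith
    by_cases hS : S.Nonempty
    · set a := sSup S with ha
      -- Iio a ⊆ S ⊆ Iic a
      have hsub1 : Iio a ⊆ S := by
        intro x hx
        rcases exists_lt_of_lt_csSup hS hx with ⟨s, hsS, hxs⟩
        exact le_trans (hFmono hxs.le) hsS
      have hsub2 : S ⊆ Iic a := fun s hs => le_csSup hbdd hs
      -- m (Iio a) ≤ ofReal t
      have hle : m (Iio a) ≤ ENNReal.ofReal t := by
        have hU : Iio a = ⋃ n : ℕ, Iio (a - 1 / (n + 1)) := by
          ext x
          simp only [mem_Iio, mem_iUnion]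
          constructor
          · intro hx
            rcases exists_nat_one_div_lt (sub_pos.mpr hx) with ⟨n, hn⟩
            exact ⟨n, by push_cast at hn ⊢; linarith⟩
          · rintro ⟨n, hn⟩
            have : (0:ℝ) < 1 / (n + 1) := by positivity
            linarith
        rw [hU, (monotone_nat_of_le_succ (fun n => Iio_subset_Iio (by
              have h1 : (0:ℝ) < (n:ℝ) + 1 := by positivity
              have h2 : (0:ℝ) < (n:ℝ) + 2 := by positivity
              have : 1 / ((n:ℝ) + 1 + 1) ≤ 1 / ((n:ℝ) + 1) := by
                apply one_div_le_one_div_of_le h1; linarith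
              push_cast
              linarith))).directed_le.measure_iUnion]
        refine iSup_le fun n => ?_
        have hlt : a - 1 / (n + 1 : ℝ) < a := by
          have : (0:ℝ) < 1 / (n + 1) := by positivity
          linarith
        rcases exists_lt_of_lt_csSup hS hlt with ⟨s, hsS, hxs⟩
        calc m (Iio (a - 1 / (n + 1))) ≤ m (Iio s) := measure_mono (Iio_subset_Iio hxs.le)
          _ = ENNReal.ofReal (F s) := (hofReal s).symm
          _ ≤ ENNReal.ofReal t := ENNReal.ofReal_le_ofReal hsS
      -- m (Iic a) ≥ ofReal t
      have hge : ENNReal.ofReal t ≤ m (Iic a) := by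
        have hI : Iic a = ⋂ n : ℕ, Iio (a + 1 / (n + 1)) := by
          ext x
          simp only [mem_Iic, mem_iInter, mem_Iio]
          constructor
          · intro hx n
            have : (0:ℝ) < 1 / (n + 1) := by positivity
            linarith
          · intro hx
            by_contra hax
            push_neg at hax
            rcases exists_nat_one_div_lt (sub_pos.mpr hax) with ⟨n, hn⟩
            have := hx n
            push_cast at hn this
            linarith
        set s : ℕ → Set ℝ := fun n => Iio (a + 1 / (n + 1)) with hs
        have hant : Antitone s := by
          refine antitone_nat_of_succ_le fun n => Iio_subset_Iio ?_
          have h1 : (0:ℝ) < (n:ℝ) + 1 := by positivity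
          have h3 : 1 / ((n:ℝ) + 1 + 1) ≤ 1 / ((n:ℝ) + 1) := by
            apply one_div_le_one_div_of_le h1; linarith
          push_cast
          linarith
        have key : m (⋂ n, s n) = ⨅ n, m (s n) :=
          hant.directed_ge.measure_iInter
            (fun n => measurableSet_Iio.nullMeasurableSet) ⟨0, measure_ne_top m _⟩
        rw [hI, key]
        refine le_iInf fun n => ?_
        have hna : a < a + 1 / (n + 1 : ℝ) := by
          have : (0:ℝ) < 1 / (n + 1) := by positivity
          linarith
        have hnotS : a + 1 / (n + 1 : ℝ) ∉ S := fun hin => absurd (hsub2 hin) (not_le.mpr hna)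
        have : t < F (a + 1 / (n + 1 : ℝ)) := not_le.mp hnotS
        calc ENNReal.ofReal t ≤ ENNReal.ofReal (F (a + 1 / (n + 1 : ℝ))) :=
              ENNReal.ofReal_le_ofReal this.le
          _ = m (Iio (a + 1 / (n + 1 : ℝ))) := hofReal _
      have hIica : m (Iic a) = ENNReal.ofReal t :=
        le_antisymm (by rw [hIic]; exact hle) hge
      have h1 : m (F ⁻¹' Iic t) = m (Iic a) :=
        le_antisymm (measure_mono hsub2) (by rw [hIic a]; exact measure_mono hsub1)
      rw [h1, hIica]
    · -- S empty; then t = 0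
      have hS' : F ⁻¹' Iic t = ∅ := not_nonempty_iff_eq_empty.mp hS
      have ht0 : t = 0 := by
        by_contra htne
        have htpos : 0 < t := lt_of_le_of_ne ht (Ne.symm htne)
        have := (tendsto_cdf_atBot m).eventually (eventually_lt_nhds htpos)
        rcases this.exists with ⟨x, hx⟩
        have hxt : F x < t := by rw [hFcdf]; exact hx
        exact hS ⟨x, hxt.le⟩
      rw [hS', ht0]
      simp
  · -- t ≥ 1
    have h1 : F ⁻¹' Iic t = univ := by
      ext x; simp only [mem_preimage, mem_Iic, mem_univ, iff_true]
      exact le_trans (hF01 x).2 ht1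
    have h2 : Iic t ∩ Ioo (0:ℝ) 1 = Ioo 0 1 := by
      refine inter_eq_self_of_subset_right fun x hx => ?_
      exact le_trans hx.2.le ht1
    rw [h1, h2, measure_univ, Real.volume_Ioo]
    norm_num



/-- Simulation-based calibration: let `θ ~ p(θ)`, `y | θ ~ p(y|θ)`, and conditionally on `y`
let `θ_post ~ p(θ|y)` be independent of `θ` given `y` (i.e. `θ` and `θ_post` are
conditionally i.i.d. given `y`). Then `(θ, y)` and `(θ_post, y)` have the same joint
distribution, and if the conditional distributions are continuous (atomless), the rank
statistic `q = P(θ > θ_post | θ, y)` is uniformly distributed on `(0,1)`. -/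
theorem sbc_rank_uniform
    {Ω : Type*} [MeasurableSpace Ω] [StandardBorelSpace Ω] [Nonempty Ω]
    (μ : Measure Ω) [IsProbabilityMeasure μ]
    (θ θpost y : Ω → ℝ)
    (hθ : Measurable θ) (hθp : Measurable θpost) (hy : Measurable y)
    (hcondiid : ∀ᵐ b ∂(μ.map y),
      condDistrib (fun ω => (θ ω, θpost ω)) y μ b
        = (condDistrib θ y μ b).prod (condDistrib θ y μ b))
    (hcont : ∀ᵐ b ∂(μ.map y), ∀ x : ℝ, condDistrib θ y μ b {x} = 0) :
    μ.map (fun ω => (θ ω, y ω)) = μ.map (fun ω => (θpost ω, y ω)) ∧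
    μ.map (fun ω => ((condDistrib θpost y μ (y ω)) (Set.Iio (θ ω))).toReal)
      = MeasureTheory.volume.restrict (Set.Ioo (0 : ℝ) 1) := by
  have hθq : Measurable fun ω => (θ ω, θpost ω) := hθ.prodMk hθp
  haveI hνp : IsProbabilityMeasure (μ.map y) := Measure.isProbabilityMeasure_map hy.aemeasurable
  set ν := μ.map y with hν
  set κ := condDistrib θ y μ with hκ
  set κ2 := condDistrib θpost y μ with hκ2
  set κJ := condDistrib (fun ω => (θ ω, θpost ω)) y μ with hκJ
  -- disintegration of (y, θ)
  haveI : IsProbabilityMeasure (μ.map fun ω => (y ω, θ ω)) :=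
    Measure.isProbabilityMeasure_map (hy.prodMk hθ).aemeasurable
  haveI : IsProbabilityMeasure (μ.map fun ω => (y ω, (θ ω, θpost ω))) :=
    Measure.isProbabilityMeasure_map (hy.prodMk hθq).aemeasurable
  have hdis : μ.map (fun ω => (y ω, θ ω)) = ν ⊗ₘ κ := by
    have h1 : (μ.map fun ω => (y ω, θ ω)).fst = ν := Measure.fst_map_prodMk hθ
    rw [hκ, condDistrib_def, ← h1]
    exact (Measure.disintegrate _ _).symm
  have hdisJ : μ.map (fun ω => (y ω, (θ ω, θpost ω))) = ν ⊗ₘ κJ := by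
    have h1 : (μ.map fun ω => (y ω, (θ ω, θpost ω))).fst = ν := Measure.fst_map_prodMk hθq
    rw [hκJ, condDistrib_def, ← h1]
    exact (Measure.disintegrate _ _).symm
  have hπ : Measurable fun p : ℝ × (ℝ × ℝ) => (p.1, p.2.2) :=
    measurable_fst.prodMk measurable_snd.snd
  have hdis2 : μ.map (fun ω => (y ω, θpost ω)) = ν ⊗ₘ κ := by
    have hcomp : (fun ω => (y ω, θpost ω))
        = (fun p : ℝ × (ℝ × ℝ) => (p.1, p.2.2)) ∘ (fun ω => (y ω, (θ ω, θpost ω))) := rfl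
    ext u hu
    rw [hcomp, ← Measure.map_map hπ (hy.prodMk hθq), hdisJ,
        Measure.map_apply hπ hu, Measure.compProd_apply (hπ hu),
        Measure.compProd_apply hu]
    refine lintegral_congr_ae ?_
    filter_upwards [hcondiid] with b hb
    have hset : Prod.mk b ⁻¹' ((fun p : ℝ × (ℝ × ℝ) => (p.1, p.2.2)) ⁻¹' u)
        = (Set.univ : Set ℝ) ×ˢ (Prod.mk b ⁻¹' u) := by
      ext c; simp [Set.mem_prod]
    rw [hset, hb, Measure.prod_prod, measure_univ, one_mul]
  have hkk2 : ∀ᵐ b ∂ν, κ b = κ2 b :=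
    (condDistrib_ae_eq_of_measure_eq_compProd y hθp.aemeasurable hdis2).mono fun b hb => hb.symm
  have hswap : Measurable (Prod.swap : ℝ × ℝ → ℝ × ℝ) := measurable_swap
  constructor
  · have e1 : (fun ω => (θ ω, y ω)) = Prod.swap ∘ (fun ω => (y ω, θ ω)) := rfl
    have e2 : (fun ω => (θpost ω, y ω)) = Prod.swap ∘ (fun ω => (y ω, θpost ω)) := rfl
    rw [e1, e2, ← Measure.map_map hswap (hy.prodMk hθ),
        ← Measure.map_map hswap (hy.prodMk hθp), hdis, hdis2]
  · -- part 2
    have hGm : Measurable fun p : ℝ × ℝ => κ2 p.1 (Set.Iio p.2) := by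
      have ht : MeasurableSet {q : (ℝ × ℝ) × ℝ | q.2 < q.1.2} :=
        measurableSet_lt measurable_snd measurable_fst.snd
      have h := Kernel.measurable_kernel_prodMk_left
        (κ := κ2.comap Prod.fst measurable_fst) ht
      simpa [Kernel.comap_apply, Set.preimage, Set.Iio] using h
    have hG : Measurable fun p : ℝ × ℝ => (κ2 p.1 (Set.Iio p.2)).toReal := hGm.ennreal_toReal
    have hq : (fun ω => ((κ2 (y ω)) (Set.Iio (θ ω))).toReal)
        = (fun p : ℝ × ℝ => (κ2 p.1 (Set.Iio p.2)).toReal) ∘ (fun ω => (y ω, θ ω)) := rfl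
    rw [hq, ← Measure.map_map hG (hy.prodMk hθ), hdis]
    ext u hu
    rw [Measure.map_apply hG hu, Measure.compProd_apply (hG hu)]
    have hae : ∀ᵐ b ∂ν,
        κ b (Prod.mk b ⁻¹' ((fun p : ℝ × ℝ => (κ2 p.1 (Set.Iio p.2)).toReal) ⁻¹' u))
          = MeasureTheory.volume.restrict (Set.Ioo (0:ℝ) 1) u := by
      filter_upwards [hkk2, hcont] with b hb hcb
      have hp : Prod.mk b ⁻¹' ((fun p : ℝ × ℝ => (κ2 p.1 (Set.Iio p.2)).toReal) ⁻¹' u)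
          = (fun x => (κ2 b (Set.Iio x)).toReal) ⁻¹' u := rfl
      rw [hp, hb]
      have hcb2 : ∀ x : ℝ, κ2 b {x} = 0 := fun x => hb ▸ hcb x
      have hFb : Measurable fun x : ℝ => (κ2 b (Set.Iio x)).toReal :=
        hG.comp (measurable_const.prodMk measurable_id)
      rw [← Measure.map_apply hFb hu, pit_aux (κ2 b) hcb2]
    rw [lintegral_congr_ae hae, lintegral_const, measure_univ, mul_one]
end

section
/- Let θ, θ_post be real random variables and y a random variable such that θ and θ_post are conditionally i.i.d. given y with continuous conditional distribution. Then for any α ∈ (0,1), the probability that θ lies between the conditional α/2 and 1−α/2 quantiles of θ_post given y equals 1−α. -/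
open MeasureTheory ProbabilityTheory

namespace NominalCoverage
open MeasureTheory Set Filter ProbabilityTheory


noncomputable def qSet (ν : Measure ℝ) (p : ℝ) : Set ℝ := {x : ℝ | p ≤ (ν (Set.Iic x)).toReal}

lemma mono_cdf (ν : Measure ℝ) [IsFiniteMeasure ν] :
    Monotone fun x => (ν (Set.Iic x)).toReal := fun _ _ hab =>
  ENNReal.toReal_mono (measure_ne_top ν _) (measure_mono (Iic_subset_Iic.mpr hab))

lemma qSet_nonempty (ν : Measure ℝ) [IsProbabilityMeasure ν] {p : ℝ} (hp1 : p < 1) :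
    (qSet ν p).Nonempty := by
  have hU : (⋃ n : ℕ, Iic (n : ℝ)) = univ := by
    ext x; simp only [mem_iUnion, mem_Iic, mem_univ, iff_true]
    obtain ⟨n, hn⟩ := exists_nat_ge x; exact ⟨n, hn⟩
  have hsup : (⨆ n : ℕ, ν (Iic (n : ℝ))) = 1 := by
    rw [← Monotone.measure_iUnion (fun a b hab => Iic_subset_Iic.mpr (by exact_mod_cast hab)),
      hU, measure_univ]
  have hlt : ENNReal.ofReal p < ⨆ n : ℕ, ν (Iic (n : ℝ)) := by
    rw [hsup]; exact ENNReal.ofReal_lt_one.mpr hp1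
  obtain ⟨n, hn⟩ := lt_iSup_iff.mp hlt
  exact ⟨n, (ENNReal.ofReal_le_iff_le_toReal (measure_ne_top ν _)).mp hn.le⟩

lemma qSet_bddBelow (ν : Measure ℝ) [IsProbabilityMeasure ν] {p : ℝ} (hp0 : 0 < p) :
    BddBelow (qSet ν p) := by
  have hI : (⋂ n : ℕ, Iic (-(n : ℝ))) = (∅ : Set ℝ) := by
    ext x; simp only [mem_iInter, mem_Iic, mem_empty_iff_false, iff_false, not_forall, not_le]
    obtain ⟨n, hn⟩ := exists_nat_gt (-x)
    exact ⟨n, by linarith⟩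
  have hinf : (⨅ n : ℕ, ν (Iic (-(n : ℝ)))) = 0 := by
    rw [← Antitone.measure_iInter (fun a b hab => Iic_subset_Iic.mpr (by simp; exact_mod_cast hab))
      (fun n => measurableSet_Iic.nullMeasurableSet) ⟨0, measure_ne_top ν _⟩, hI, measure_empty]
  have hlt : (⨅ n : ℕ, ν (Iic (-(n : ℝ)))) < ENNReal.ofReal p := by
    rw [hinf]; exact ENNReal.ofReal_pos.mpr hp0
  obtain ⟨n, hn⟩ := iInf_lt_iff.mp hlt
  refine ⟨-(n : ℝ), fun z hz => ?_⟩
  by_contra hzn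
  push_neg at hzn
  have h1 : (ν (Iic z)).toReal < p :=
    lt_of_le_of_lt (mono_cdf ν hzn.le) (ENNReal.toReal_lt_of_lt_ofReal hn)
  exact absurd hz (by simp only [qSet, mem_setOf_eq, not_le]; exact h1)

lemma measure_Iic_qInf (ν : Measure ℝ) [IsProbabilityMeasure ν]
    (hcont : ∀ x : ℝ, ν {x} = 0) {p : ℝ} (hp0 : 0 < p) (hp1 : p < 1) :
    ν (Iic (sInf (qSet ν p))) = ENNReal.ofReal p := by
  set q := sInf (qSet ν p) with hq
  have hne := qSet_nonempty ν hp1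
  have hbdd := qSet_bddBelow ν hp0
  refine le_antisymm ?_ ?_
  · -- ν (Iic q) ≤ ofReal p
    have hIio : Iio q = ⋃ n : ℕ, Iic (q - 1 / (n + 1)) := by
      ext x
      simp only [mem_Iio, mem_iUnion, mem_Iic]
      constructor
      · intro hx
        obtain ⟨n, hn⟩ := exists_nat_one_div_lt (show (0:ℝ) < q - x by linarith)
        exact ⟨n, by push_cast at hn ⊢; linarith⟩
      · rintro ⟨n, hn⟩
        have : (0:ℝ) < 1 / (n + 1) := by positivity
        linarith
    have hIio_le : ν (Iio q) ≤ ENNReal.ofReal p := by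
      rw [hIio, Monotone.measure_iUnion]
      · refine iSup_le fun n => ?_
        have hlt : q - 1 / ((n : ℝ) + 1) < q := by
          have : (0:ℝ) < 1 / ((n:ℝ) + 1) := by positivity
          linarith
        have hnot : q - 1 / ((n : ℝ) + 1) ∉ qSet ν p := notMem_of_lt_csInf hlt hbdd
        have : (ν (Iic (q - 1 / ((n:ℝ) + 1)))).toReal < p := by
          simpa [qSet, not_le] using hnot
        exact ((ENNReal.lt_ofReal_iff_toReal_lt (measure_ne_top ν _)).mpr this).le
      · intro a b hab
        refine Iic_subset_Iic.mpr ?_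
        have : (1:ℝ) / (b + 1) ≤ 1 / (a + 1) := by
          apply one_div_le_one_div_of_le <;> [positivity; exact_mod_cast by linarith [(show (a:ℝ) ≤ b by exact_mod_cast hab)]]
        linarith
    calc ν (Iic q) ≤ ν (Iio q ∪ {q}) := measure_mono (by
            intro x hx
            rcases lt_or_eq_of_le (mem_Iic.mp hx) with h | h
            · exact Or.inl h
            · exact Or.inr (by simp [h]))
      _ ≤ ν (Iio q) + ν {q} := measure_union_le _ _
      _ = ν (Iio q) := by rw [hcont q, add_zero]
      _ ≤ ENNReal.ofReal p := hIio_le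
  · -- ofReal p ≤ ν (Iic q)
    have hIic : Iic q = ⋂ n : ℕ, Iic (q + 1 / (n + 1)) := by
      ext x
      simp only [mem_Iic, mem_iInter]
      constructor
      · intro hx n
        have : (0:ℝ) ≤ 1 / ((n:ℝ) + 1) := by positivity
        linarith
      · intro h
        by_contra hx
        push_neg at hx
        obtain ⟨n, hn⟩ := exists_nat_one_div_lt (show (0:ℝ) < x - q by linarith)
        have := h n
        push_cast at hn this
        linarith
    rw [hIic, Antitone.measure_iInter]
    · refine le_iInf fun n => ?_
      have hmem : q + 1 / ((n:ℝ) + 1) ∈ qSet ν p := by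
        have hlt : q < q + 1 / ((n:ℝ) + 1) := by
          have : (0:ℝ) < 1 / ((n:ℝ) + 1) := by positivity
          linarith
        obtain ⟨s, hs, hs'⟩ := (csInf_lt_iff hbdd hne).mp hlt
        exact le_trans hs (mono_cdf ν hs'.le)
      exact (ENNReal.ofReal_le_iff_le_toReal (measure_ne_top ν _)).mpr hmem
    · intro a b hab
      refine Iic_subset_Iic.mpr ?_
      have h1 : (1:ℝ) / ((b:ℝ) + 1) ≤ 1 / ((a:ℝ) + 1) := by
        apply one_div_le_one_div_of_le
        · positivity
        · have : (a:ℝ) ≤ b := by exact_mod_cast hab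
          linarith
      linarith
    · exact fun n => measurableSet_Iic.nullMeasurableSet
    · exact ⟨0, measure_ne_top ν _⟩

lemma coverage_Ioo (ν : Measure ℝ) [IsProbabilityMeasure ν]
    (hcont : ∀ x : ℝ, ν {x} = 0) {α : ℝ} (hα0 : 0 < α) (hα1 : α < 1) :
    ν (Ioo (sInf (qSet ν (α / 2))) (sInf (qSet ν (1 - α / 2)))) = ENNReal.ofReal (1 - α) := by
  set a := sInf (qSet ν (α / 2))
  set c := sInf (qSet ν (1 - α / 2))
  have hac : a ≤ c := by
    refine csInf_le_csInf (qSet_bddBelow ν (by linarith)) (qSet_nonempty ν (by linarith)) ?_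
    intro x hx
    simp only [qSet, mem_setOf_eq] at hx ⊢
    linarith
  have ha : ν (Iic a) = ENNReal.ofReal (α / 2) := measure_Iic_qInf ν hcont (by linarith) (by linarith)
  have hc : ν (Iic c) = ENNReal.ofReal (1 - α / 2) := measure_Iic_qInf ν hcont (by linarith) (by linarith)
  have hIoc : ν (Ioc a c) = ENNReal.ofReal (1 - α) := by
    have : Ioc a c = Iic c \ Iic a := by rw [Iic_sdiff_Iic]
    rw [this, measure_diff (Iic_subset_Iic.mpr hac) measurableSet_Iic.nullMeasurableSet
      (measure_ne_top ν _), ha, hc, ← ENNReal.ofReal_sub _ (by linarith)]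
    ring_nf
  have : Ioo a c = Ioc a c \ {c} := by
    ext x
    simp only [mem_Ioo, mem_diff, mem_Ioc, mem_singleton_iff]
    constructor
    · rintro ⟨h1, h2⟩; exact ⟨⟨h1, h2.le⟩, fun h => by linarith⟩
    · rintro ⟨⟨h1, h2⟩, h3⟩; exact ⟨h1, lt_of_le_of_ne h2 h3⟩
  rw [this, measure_diff_null (hcont c), hIoc]

section Kern
variable {Ω : Type*} [MeasurableSpace Ω] [StandardBorelSpace Ω] [Nonempty Ω]
    {μ : Measure Ω} [IsProbabilityMeasure μ]
    {θ θpost y : Ω → ℝ}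

variable {Ω : Type*} [MeasurableSpace Ω] [StandardBorelSpace Ω] [Nonempty Ω]
    {μ : Measure Ω} [IsProbabilityMeasure μ]
    {θ θpost y : Ω → ℝ}

lemma map_eq_compProd (hθ : Measurable θ) (hy : Measurable y) :
    μ.map (fun a => (y a, θ a)) = (μ.map y) ⊗ₘ condDistrib θ y μ := by
  have h1 : (μ.map (fun a => (y a, θ a))).fst = μ.map y := Measure.fst_map_prodMk hθ
  rw [condDistrib, ← h1]
  exact (Measure.disintegrate _ _).symm

lemma kernel_ae_eq (hθ : Measurable θ) (hθp : Measurable θpost) (hy : Measurable y)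
    (hcondiid : ∀ᵐ b ∂(μ.map y),
      condDistrib (fun ω => (θ ω, θpost ω)) y μ b
        = (condDistrib θ y μ b).prod (condDistrib θ y μ b)) :
    ∀ᵐ b ∂(μ.map y), condDistrib θ y μ b = condDistrib θpost y μ b := by
  set κ := condDistrib θ y μ with hκdef
  refine (condDistrib_ae_eq_of_measure_eq_compProd_of_measurable (κ := κ) hy hθp ?_).mono fun b hb => hb.symm
  have hmap : IsProbabilityMeasure (μ.map (fun x => (y x, θpost x))) :=
    Measure.isProbabilityMeasure_map ((hy.prodMk hθp)).aemeasurable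
  have hcp : IsProbabilityMeasure ((μ.map y) ⊗ₘ κ) := by
    rw [← map_eq_compProd hθ hy]
    exact Measure.isProbabilityMeasure_map ((hy.prodMk hθ)).aemeasurable
  refine ext_of_generate_finite _ generateFrom_prod.symm isPiSystem_prod ?_ (by simp)
  rintro _ ⟨t, ht, s, hs, rfl⟩
  simp only [mem_setOf_eq] at ht hs
  rw [Measure.map_apply (hy.prodMk hθp) (ht.prod hs), mk_preimage_prod,
    Measure.compProd_apply_prod ht hs]
  have h2 : ∫⁻ b in t, κ b s ∂(μ.map y) = ∫⁻ a in y ⁻¹' t, κ (y a) s ∂μ := by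
    rw [Measure.restrict_map hy ht,
      lintegral_map (Kernel.measurable_coe κ hs) hy]
  have h3 : ∀ᵐ a ∂μ, condDistrib (fun ω => (θ ω, θpost ω)) y μ (y a)
      = (κ (y a)).prod (κ (y a)) := ae_of_ae_map hy.aemeasurable hcondiid
  have h4 : ∫⁻ a in y ⁻¹' t, κ (y a) s ∂μ
      = ∫⁻ a in y ⁻¹' t, condDistrib (fun ω => (θ ω, θpost ω)) y μ (y a) (univ ×ˢ s) ∂μ := by
    refine lintegral_congr_ae (ae_restrict_of_ae (h3.mono fun a ha => ?_))
    dsimp only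
    rw [ha, Measure.prod_prod, measure_univ, one_mul]
  have h5 : ∫⁻ a in y ⁻¹' t, condDistrib (fun ω => (θ ω, θpost ω)) y μ (y a) (univ ×ˢ s) ∂μ
      = μ (y ⁻¹' t ∩ (fun ω => (θ ω, θpost ω)) ⁻¹' (univ ×ˢ s)) :=
    setLIntegral_preimage_condDistrib hy (hθ.prodMk hθp).aemeasurable
      (MeasurableSet.univ.prod hs) ht
  have h6 : (fun ω => (θ ω, θpost ω)) ⁻¹' ((univ : Set ℝ) ×ˢ s) = θpost ⁻¹' s := by
    ext a; simp [Set.mem_prod]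
  rw [h2, h4, h5, h6]

lemma measurable_Q (hθp : Measurable θpost) {p : ℝ} (hp0 : 0 < p) (hp1 : p < 1) :
    Measurable fun b => sInf (qSet (condDistrib θpost y μ b) p) := by
  set κp := condDistrib θpost y μ with hκp
  refine measurable_of_Iio fun t => ?_
  have : (fun b => sInf (qSet (κp b) p)) ⁻¹' Iio t
      = ⋃ q : ℚ, ⋃ (_ : (q : ℝ) < t), {b | p ≤ (κp b (Iic (q : ℝ))).toReal} := by
    ext b
    simp only [mem_preimage, mem_Iio, mem_iUnion, mem_setOf_eq]
    constructor
    · intro h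
      obtain ⟨x, hx, hxt⟩ := (csInf_lt_iff (qSet_bddBelow (κp b) hp0)
        (qSet_nonempty (κp b) hp1)).mp h
      obtain ⟨q, hq1, hq2⟩ := exists_rat_btwn hxt
      exact ⟨q, hq2, le_trans hx (mono_cdf (κp b) hq1.le)⟩
    · rintro ⟨q, hqt, hq⟩
      exact lt_of_le_of_lt (csInf_le (qSet_bddBelow (κp b) hp0) hq) hqt
  rw [this]
  refine MeasurableSet.iUnion fun q => MeasurableSet.iUnion fun _ => ?_
  exact measurableSet_le measurable_const
    (Kernel.measurable_coe κp measurableSet_Iic).ennreal_toReal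


end Kern

end NominalCoverage

open NominalCoverage in
/-- Nominal coverage of exact Bayesian intervals: let `θ`, `θpost` be real random
variables and `y` a random variable such that `θ` and `θpost` are conditionally i.i.d.
given `y` with continuous (atomless) conditional distribution. Then for any `α ∈ (0,1)`,
the probability that `θ` lies between the conditional `α/2` and `1 − α/2` quantiles of
`θpost` given `y` equals `1 − α`. -/
theorem nominal_coverage_exact_posterior
    {Ω : Type*} [MeasurableSpace Ω] [StandardBorelSpace Ω] [Nonempty Ω]
    (μ : Measure Ω) [IsProbabilityMeasure μ]
    (θ θpost y : Ω → ℝ)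
    (hθ : Measurable θ) (hθp : Measurable θpost) (hy : Measurable y)
    (hcondiid : ∀ᵐ b ∂(μ.map y),
      condDistrib (fun ω => (θ ω, θpost ω)) y μ b
        = (condDistrib θ y μ b).prod (condDistrib θ y μ b))
    (hcont : ∀ᵐ b ∂(μ.map y), ∀ x : ℝ, condDistrib θpost y μ b {x} = 0)
    (α : ℝ) (hα : α ∈ Set.Ioo (0 : ℝ) 1)
    (Q : ℝ → ℝ → ℝ)
    (hQ : ∀ b p, Q b p
      = sInf {x : ℝ | p ≤ ((condDistrib θpost y μ b) (Set.Iic x)).toReal}) :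
    μ {ω | Q (y ω) (α / 2) < θ ω ∧ θ ω < Q (y ω) (1 - α / 2)}
      = ENNReal.ofReal (1 - α) := by
  obtain ⟨hα0, hα1⟩ := hα
  set κ := condDistrib θ y μ with hκdef
  set κp := condDistrib θpost y μ with hκpdef
  have hQ' : ∀ b p, Q b p = sInf (qSet (κp b) p) := hQ
  have hQm1 : Measurable fun b => Q b (α / 2) := by
    simp only [funext fun b => hQ' b (α / 2)]
    exact measurable_Q hθp (by linarith) (by linarith)
  have hQm2 : Measurable fun b => Q b (1 - α / 2) := by
    simp only [funext fun b => hQ' b (1 - α / 2)]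
    exact measurable_Q hθp (by linarith) (by linarith)
  set S : Set (ℝ × ℝ) := {p | Q p.1 (α / 2) < p.2 ∧ p.2 < Q p.1 (1 - α / 2)} with hSdef
  have hS : MeasurableSet S :=
    (measurableSet_lt (hQm1.comp measurable_fst) measurable_snd).inter
      (measurableSet_lt measurable_snd (hQm2.comp measurable_fst))
  have hEeq : {ω | Q (y ω) (α / 2) < θ ω ∧ θ ω < Q (y ω) (1 - α / 2)}
      = (fun ω => (y ω, θ ω)) ⁻¹' S := rfl
  have hν : IsProbabilityMeasure (μ.map y) := Measure.isProbabilityMeasure_map hy.aemeasurable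
  rw [hEeq, ← Measure.map_apply (hy.prodMk hθ) hS, map_eq_compProd hθ hy,
    Measure.compProd_apply hS]
  have hae := kernel_ae_eq hθ hθp hy hcondiid
  have hmain : ∀ᵐ b ∂(μ.map y), κ b (Prod.mk b ⁻¹' S) = ENNReal.ofReal (1 - α) := by
    filter_upwards [hae, hcont] with b hb hc
    have hpre : Prod.mk b ⁻¹' S = Set.Ioo (Q b (α / 2)) (Q b (1 - α / 2)) := by
      ext x; simp [hSdef, Set.mem_Ioo]
    rw [hpre, hb, hQ' b (α / 2), hQ' b (1 - α / 2)]
    exact coverage_Ioo (κp b) hc hα0 hα1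
  rw [lintegral_congr_ae hmain, lintegral_const, measure_univ, mul_one]
end

section
/- Suppose the approximate posterior for each replication is N(μ^l_post, σ_post/c) for a fixed known constant c > 0, where the exact posterior is N(μ^l_post, σ_post). Then the z-scores z^l = (θ^l − μ^l_post)/(σ_post/c) computed under the prior predictive distribution are N(0, c²), so the z-score recalibration factor s_z = c exactly recovers the true posterior standard deviation. -/
open MeasureTheory ProbabilityTheory


open Real Complex
open scoped NNReal

lemma integral_rexp_quadratic {b : ℝ} (hb : b < 0) (c d : ℝ) :
    ∫ x : ℝ, Real.exp (b*x^2 + c*x + d)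
      = Real.sqrt (π / -b) * Real.exp (d - c^2/(4*b)) := by
  have hb' : (b : ℂ).re < 0 := by simpa using hb
  have h := integral_cexp_quadratic hb' c d
  have hl : ∫ x : ℝ, Complex.exp (↑b * ↑x ^ 2 + ↑c * ↑x + ↑d)
      = ((∫ x : ℝ, Real.exp (b*x^2 + c*x + d) : ℝ) : ℂ) := by
    calc ∫ x : ℝ, Complex.exp (↑b * ↑x ^ 2 + ↑c * ↑x + ↑d)
        = ∫ x : ℝ, ((Real.exp (b*x^2+c*x+d) : ℝ) : ℂ) := by
          apply integral_congr_ae; filter_upwards with x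
          rw [Complex.ofReal_exp]; norm_cast
      _ = _ := integral_ofReal
  have hr : ((π : ℂ) / -b) ^ (1 / 2 : ℂ) * Complex.exp (↑d - ↑c^2 / (4 * ↑b))
      = ((Real.sqrt (π / -b) * Real.exp (d - c^2/(4*b)) : ℝ) : ℂ) := by
    have h0 : (0:ℝ) ≤ π / -b := div_nonneg pi_pos.le (by linarith)
    rw [Real.sqrt_eq_rpow, Complex.ofReal_mul, Complex.ofReal_cpow h0, Complex.ofReal_exp]
    push_cast
    norm_num
  rw [hl, hr] at h
  exact_mod_cast h

lemma integrable_rexp_quadratic {b : ℝ} (hb : b < 0) (c d : ℝ) :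
    Integrable (fun x : ℝ => Real.exp (b*x^2 + c*x + d)) := by
  have hb' : (b : ℂ).re < 0 := by simpa using hb
  have h := (integrable_cexp_quadratic' hb' c d).norm
  convert h using 2 with x
  rw [Complex.norm_exp]
  congr 1
  have : (↑b * ↑x ^ 2 + ↑c * ↑x + ↑d : ℂ) = ((b*x^2+c*x+d : ℝ) : ℂ) := by push_cast; ring
  rw [this, Complex.ofReal_re]

open scoped NNReal

lemma gaussianPDFReal_mul_eq (v₁ v₂ : ℝ≥0) (h₁ : 0 < (v₁:ℝ)) (h₂ : 0 < (v₂:ℝ)) (t x : ℝ) :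
    gaussianPDFReal 0 v₁ x * gaussianPDFReal 0 v₂ (t - x)
      = (√(2*π*v₁))⁻¹ * (√(2*π*v₂))⁻¹ *
        Real.exp ((-(1/(2*v₁) + 1/(2*v₂))) * x^2 + (t/v₂) * x + (-(t^2)/(2*v₂))) := by
  simp only [gaussianPDFReal, sub_zero, ← Real.exp_add]
  rw [mul_mul_mul_comm]
  congr 1
  rw [← Real.exp_add]
  congr 1
  field_simp
  ring

lemma gaussianPDFReal_conv (v₁ v₂ : ℝ≥0) (h₁ : 0 < (v₁:ℝ)) (h₂ : 0 < (v₂:ℝ)) (t : ℝ) :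
    ∫ x : ℝ, gaussianPDFReal 0 v₁ x * gaussianPDFReal 0 v₂ (t - x)
      = gaussianPDFReal 0 (v₁ + v₂) t := by
  have hb : (-(1/(2*(v₁:ℝ)) + 1/(2*(v₂:ℝ)))) < 0 := by
    have : 0 < 1/(2*(v₁:ℝ)) + 1/(2*(v₂:ℝ)) := by positivity
    linarith
  simp_rw [gaussianPDFReal_mul_eq v₁ v₂ h₁ h₂ t, integral_const_mul,
    integral_rexp_quadratic hb]
  rw [gaussianPDFReal]
  push_cast
  have h12 : (0:ℝ) < (v₁:ℝ) + v₂ := by positivity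
  have h2pi : (0:ℝ) < 2*π := by positivity
  have e1 : π / -(-(1/(2*(v₁:ℝ)) + 1/(2*(v₂:ℝ)))) = 2*π*v₁*v₂/((v₁:ℝ)+v₂) := by
    field_simp; ring
  have e2 : (-(t^2)/(2*(v₂:ℝ)) - (t/v₂)^2/(4 * (-(1/(2*(v₁:ℝ)) + 1/(2*(v₂:ℝ))))))
      = -(t-0)^2/(2*((v₁:ℝ)+v₂)) := by
    have hd : (4 * (-(1/(2*(v₁:ℝ)) + 1/(2*(v₂:ℝ))))) = -(2*((v₁:ℝ)+v₂))/((v₁:ℝ)*v₂) := by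
      field_simp; ring
    rw [hd, div_div_eq_mul_div, div_neg, ← sub_neg_eq_add, sub_neg_eq_add]
    field_simp
    linear_combination t^2 * mul_inv_cancel₀ h12.ne'
  have hs : √(2*π*(v₁:ℝ)*v₂/((v₁:ℝ)+v₂)) = √(2*π)*√(v₁:ℝ)*√(v₂:ℝ)/√((v₁:ℝ)+(v₂:ℝ)) := by
    rw [← Real.sqrt_mul h2pi.le, ← Real.sqrt_mul (by positivity),
      ← Real.sqrt_div (by positivity)]
  rw [e1, e2, hs,
    show √(2*π*(v₂:ℝ)) = √(2*π)*√(v₂:ℝ) from Real.sqrt_mul h2pi.le _,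
    show √(2*π*(v₁:ℝ)) = √(2*π)*√(v₁:ℝ) from Real.sqrt_mul h2pi.le _,
    show √(2*π*((v₁:ℝ)+(v₂:ℝ))) = √(2*π)*√((v₁:ℝ)+(v₂:ℝ)) from by
      rw [← Real.sqrt_mul h2pi.le, mul_assoc]]
  have s1 : (0:ℝ) < √(v₁:ℝ) := Real.sqrt_pos.mpr h₁
  have s2 : (0:ℝ) < √(2*π) := Real.sqrt_pos.mpr h2pi
  have s3 : (0:ℝ) < √(v₂:ℝ) := Real.sqrt_pos.mpr h₂
  have s4 : (0:ℝ) < √((v₁:ℝ)+v₂) := Real.sqrt_pos.mpr h12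
  field_simp
lemma gaussianPDFReal_shift (v : ℝ≥0) (x t : ℝ) :
    gaussianPDFReal x v t = gaussianPDFReal 0 v (t - x) := by
  simp [gaussianPDFReal]

lemma gaussianReal_conv (v₁ v₂ : ℝ≥0) (h₁ : v₁ ≠ 0) (h₂ : v₂ ≠ 0) :
    ((gaussianReal 0 v₁).prod (gaussianReal 0 v₂)).map (fun p : ℝ × ℝ => p.1 + p.2)
      = gaussianReal 0 (v₁ + v₂) := by
  have h₁' : 0 < (v₁:ℝ) := by positivity
  have h₂' : 0 < (v₂:ℝ) := by positivity
  ext s hs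
  rw [Measure.map_apply measurable_add hs,
    Measure.prod_apply (measurable_add hs)]
  have hxy : ∀ x : ℝ, (Prod.mk x ⁻¹' ((fun p : ℝ × ℝ => p.1 + p.2) ⁻¹' s))
      = (fun y => x + y) ⁻¹' s := fun x => rfl
  have step1 : ∀ x : ℝ, gaussianReal 0 v₂ ((fun y => x + y) ⁻¹' s)
      = ∫⁻ t in s, gaussianPDF x v₂ t := by
    intro x
    rw [← Measure.map_apply (measurable_const_add x) hs,
      gaussianReal_map_const_add, zero_add, gaussianReal_apply _ h₂]
  simp_rw [hxy, step1]
  rw [gaussianReal_of_var_ne_zero _ h₁,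
    lintegral_withDensity_eq_lintegral_mul _ (measurable_gaussianPDF _ _) ?hm]
  case hm =>
    apply Measurable.lintegral_prod_right (f := fun (x t : ℝ) => gaussianPDF x v₂ t)
    apply Measurable.ennreal_ofReal
    have : (fun p : ℝ × ℝ => gaussianPDFReal p.1 v₂ p.2)
        = fun p : ℝ × ℝ => gaussianPDFReal 0 v₂ (p.2 - p.1) := by
      funext p; rw [gaussianPDFReal_shift]
    exact this ▸ (measurable_gaussianPDFReal 0 v₂).comp (measurable_snd.sub measurable_fst)
  have hswap : ∫⁻ a, (gaussianPDF 0 v₁ * fun x => ∫⁻ t in s, gaussianPDF x v₂ t) a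
      = ∫⁻ t in s, ∫⁻ a, gaussianPDF 0 v₁ a * gaussianPDF a v₂ t := by
    rw [← lintegral_lintegral_swap]
    · apply lintegral_congr; intro a
      simp only [Pi.mul_apply]
      rw [← lintegral_const_mul _ (measurable_gaussianPDF a v₂)]
    · apply Measurable.aemeasurable
      apply Measurable.mul (f := fun p : ℝ × ℝ => gaussianPDF 0 v₁ p.1) (g := fun p : ℝ × ℝ => gaussianPDF p.1 v₂ p.2)
      · exact (measurable_gaussianPDF 0 v₁).comp measurable_fst
      · apply Measurable.ennreal_ofReal
        have : (fun p : ℝ × ℝ => gaussianPDFReal p.1 v₂ p.2)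
            = fun p : ℝ × ℝ => gaussianPDFReal 0 v₂ (p.2 - p.1) := by
          funext p; rw [gaussianPDFReal_shift]
        exact this ▸ (measurable_gaussianPDFReal 0 v₂).comp (measurable_snd.sub measurable_fst)
  rw [hswap]
  · have inner : ∀ t : ℝ, ∫⁻ x, gaussianPDF 0 v₁ x * gaussianPDF x v₂ t
        = gaussianPDF 0 (v₁ + v₂) t := by
      intro t
      have hnn : ∀ x, 0 ≤ gaussianPDFReal 0 v₁ x * gaussianPDFReal 0 v₂ (t - x) :=
        fun x => mul_nonneg (gaussianPDFReal_nonneg _ _ _) (gaussianPDFReal_nonneg _ _ _)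
      have hint : Integrable (fun x => gaussianPDFReal 0 v₁ x * gaussianPDFReal 0 v₂ (t - x)) := by
        have hb : (-(1/(2*(v₁:ℝ)) + 1/(2*(v₂:ℝ)))) < 0 := by
          have : 0 < 1/(2*(v₁:ℝ)) + 1/(2*(v₂:ℝ)) := by positivity
          linarith
        simp_rw [gaussianPDFReal_mul_eq v₁ v₂ h₁' h₂' t]
        exact (integrable_rexp_quadratic hb _ _).const_mul _
      calc ∫⁻ x, gaussianPDF 0 v₁ x * gaussianPDF x v₂ t
          = ∫⁻ x, ENNReal.ofReal (gaussianPDFReal 0 v₁ x * gaussianPDFReal 0 v₂ (t - x)) := by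
            congr 1; funext x
            rw [gaussianPDF, gaussianPDF, gaussianPDFReal_shift v₂ x t,
              ← ENNReal.ofReal_mul (gaussianPDFReal_nonneg _ _ _)]
        _ = ENNReal.ofReal (∫ x, gaussianPDFReal 0 v₁ x * gaussianPDFReal 0 v₂ (t - x)) :=
            (ofReal_integral_eq_lintegral_ofReal hint (ae_of_all _ hnn)).symm
        _ = gaussianPDF 0 (v₁ + v₂) t := by
            rw [gaussianPDFReal_conv v₁ v₂ h₁' h₂' t]; rfl
    simp_rw [inner]
    rw [gaussianReal_apply _ (by simp [h₁]) s]
lemma map_lin_comb {Ω : Type*} [MeasurableSpace Ω] (μ : Measure Ω) [IsProbabilityMeasure μ]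
    (X Y : Ω → ℝ) (hX : Measurable X) (hY : Measurable Y) (h : IndepFun X Y μ)
    (hXg : μ.map X = gaussianReal 0 1) (hYg : μ.map Y = gaussianReal 0 1)
    (a b : ℝ) (ha : a ≠ 0) (hb : b ≠ 0) :
    μ.map (fun ω => a * X ω + b * Y ω) = gaussianReal 0 ((a^2+b^2).toNNReal) := by
  have haX : μ.map (fun ω => a * X ω) = gaussianReal 0 (⟨a^2, sq_nonneg a⟩ : ℝ≥0) := by
    have h' : (fun ω => a * X ω) = (fun x => a * x) ∘ X := rfl
    rw [h', ← Measure.map_map (measurable_const_mul a) hX, hXg,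
      gaussianReal_map_const_mul]
    simp
    rfl
  have hbY : μ.map (fun ω => b * Y ω) = gaussianReal 0 (⟨b^2, sq_nonneg b⟩ : ℝ≥0) := by
    have h' : (fun ω => b * Y ω) = (fun x => b * x) ∘ Y := rfl
    rw [h', ← Measure.map_map (measurable_const_mul b) hY, hYg,
      gaussianReal_map_const_mul]
    simp
    rfl
  have hind : IndepFun (fun ω => a * X ω) (fun ω => b * Y ω) μ :=
    h.comp (measurable_const_mul a) (measurable_const_mul b)
  have hjoint : μ.map (fun ω => (a * X ω, b * Y ω))
      = (gaussianReal 0 (⟨a^2, sq_nonneg a⟩ : ℝ≥0)).prod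
          (gaussianReal 0 (⟨b^2, sq_nonneg b⟩ : ℝ≥0)) := by
    rw [← haX, ← hbY]
    exact (indepFun_iff_map_prod_eq_prod_map_map
      (hX.const_mul a).aemeasurable
      (hY.const_mul b).aemeasurable).mp hind
  have hcomp : (fun ω => a * X ω + b * Y ω)
      = (fun p : ℝ × ℝ => p.1 + p.2) ∘ (fun ω => (a * X ω, b * Y ω)) := rfl
  have hva : (⟨a^2, sq_nonneg a⟩ : ℝ≥0) ≠ 0 := by
    intro hh
    exact pow_ne_zero 2 ha (congrArg NNReal.toReal hh)
  have hvb : (⟨b^2, sq_nonneg b⟩ : ℝ≥0) ≠ 0 := by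
    intro hh
    exact pow_ne_zero 2 hb (congrArg NNReal.toReal hh)
  rw [hcomp, ← Measure.map_map measurable_add
      ((hX.const_mul a).prodMk (hY.const_mul b)),
    hjoint, gaussianReal_conv _ _ hva hvb]
  congr 1
  ext
  simp [Real.coe_toNNReal _ (by positivity : (0:ℝ) ≤ a^2+b^2)]
  rfl

/-- Normal-normal model `θ ~ N(0,1)`, `y = θ + σε` with exact posterior sd
`σ_post = σ/√(1+σ²)`. If the approximate posterior artificially narrows the sd by a known
factor `c > 0`, i.e. the approximate posterior is `N(μ_post^l, (σ_post/c)²)`, then the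
z-scores `z = (θ − μ_post)/(σ_post/c)` under the prior predictive distribution are
`N(0, c²)`; hence the z-score recalibration factor `s_z = c` exactly recovers the true
posterior standard deviation: `c · (σ_post/c) = σ_post`. -/
theorem narrowed_posterior_zscore_recalibration
    {Ω : Type*} [MeasurableSpace Ω]
    (μ : Measure Ω) [IsProbabilityMeasure μ]
    (θ ε : Ω → ℝ) (hθm : Measurable θ) (hεm : Measurable ε)
    (hindep : IndepFun θ ε μ)
    (hθ : μ.map θ = gaussianReal 0 1) (hε : μ.map ε = gaussianReal 0 1)
    (σ c : ℝ) (hσ : 0 < σ) (hc : 0 < c)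
    (y z : Ω → ℝ)
    (hy : y = fun ω => θ ω + σ * ε ω)
    (σpost : ℝ) (hσpost : σpost = σ / Real.sqrt (1 + σ ^ 2))
    (hz : z = fun ω => (θ ω - y ω / (1 + σ ^ 2)) / (σpost / c)) :
    μ.map z = gaussianReal 0 ((c ^ 2).toNNReal) ∧ c * (σpost / c) = σpost := by
  have h1σ : (0:ℝ) < 1 + σ ^ 2 := by positivity
  set r : ℝ := Real.sqrt (1 + σ ^ 2) with hrdef
  have hr : 0 < r := Real.sqrt_pos.mpr h1σ
  have hr2 : r ^ 2 = 1 + σ ^ 2 := Real.sq_sqrt h1σ.le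
  have ha : c * σ / r ≠ 0 := by positivity
  have hb : -(c / r) ≠ 0 := by
    simp only [ne_eq, neg_eq_zero]
    positivity
  constructor
  · have hzz : z = fun ω => (c * σ / r) * θ ω + (-(c / r)) * ε ω := by
      funext ω
      rw [hz, hy, hσpost]
      rw [← hr2]
      field_simp
      linear_combination (θ ω) * hr2
    rw [hzz, map_lin_comb μ θ ε hθm hεm hindep hθ hε _ _ ha hb]
    congr 1
    have : (c * σ / r) ^ 2 + (-(c / r)) ^ 2 = c ^ 2 := by
      field_simp
      linear_combination (-1) * hr2
    rw [this]
  · field_simp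
end
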